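/- On the three-element type {1,2,3}, the relation whose true instances are exactly B 1 2 3, B 2 1 3, B 2 3 1 satisfies Huntington's axioms B, D, and 9 but falsifies both A and C. -/
import Mathlib


def B18 : Fin 3 → Fin 3 → Fin 3 → Prop := fun a b c =>
  (a, b, c) = (0, 1, 2) ∨ (a, b, c) = (1, 0, 2) ∨ (a, b, c) = (1, 2, 0)

theorem stmt18 :
    (∀ a b c : Fin 3, a ≠ b → a ≠ c → b ≠ c → (B18 b a c ∨ B18 c a b ∨ B18 a b c ∨ B18 c b a ∨ B18 a c b ∨ B18 b c a)) ∧ (∀ a b c : Fin 3, B18 a b c → a ≠ b ∧ a ≠ c ∧ b ≠ c) ∧ (∀ a b c x : Fin 3, B18 a b c → a ≠ b → a ≠ c → a ≠ x → b ≠ c → b ≠ x → c ≠ x → (B18 a b x ∨ B18 x b c)) ∧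
    (∃ a b c : Fin 3, B18 a b c ∧ ¬ B18 c b a) ∧
    (∃ a x y : Fin 3, a ≠ x ∧ a ≠ y ∧ x ≠ y ∧ B18 a x y ∧ B18 a y x) := by
  refine ⟨by unfold B18; decide, by unfold B18; decide, by intro a b c x hB _ _ _ _ _ _; unfold B18 at *; fin_cases a <;> fin_cases b <;> fin_cases c <;> fin_cases x <;> simp_all, ⟨0,1,2, by unfold B18; decide⟩, ⟨1,0,2, by unfold B18; decide⟩⟩
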